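/- Let S be a finite collection of pairwise disjoint chains with n ≥ 2 entries in total, let E be the set of all entries, and let σ : E → E be the bijection that reverses each chain, i.e., σ(x) = max C + min C − x where C is the chain of S containing x. Then S is interlaced if and only if for every 1 ≤ a ≤ n−1, the set of the a largest elements of E is not mapped onto itself by σ. -/

import Mathlib

/-- The maximum entry of a finite set of integers (`0` for the empty set). -/
def fmax (C : Finset ℤ) : ℤ := WithBot.unbotD 0 C.max

/-- The minimum entry of a finite set of integers (`0` for the empty set). -/
def fmin (C : Finset ℤ) : ℤ := WithTop.untopD 0 C.min

/-- A *chain* is a nonempty set of integers of the form `{c, c-2, …, c-2k}`. -/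
def IsChainSet (C : Finset ℤ) : Prop :=
  ∃ (c : ℤ) (k : ℕ), C = (Finset.range (k + 1)).image (fun i : ℕ => c - 2 * (i : ℤ))

/-- Two chains with disjoint entries, with maxima `A, B` and minima `a, b`, are *linked*
if `A > B > a` or `B > A > b`. -/
def LinkedChains (C D : Finset ℤ) : Prop :=
  Disjoint C D ∧
    ((fmax D < fmax C ∧ fmin C < fmax D) ∨ (fmax C < fmax D ∧ fmin D < fmax C))

/-- The set of all entries of a collection of chains. -/
def entriesOf (S : Finset (Finset ℤ)) : Finset ℤ := S.biUnion id

/-- A finite collection of pairwise disjoint chains. -/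
def IsChainCollection (S : Finset (Finset ℤ)) : Prop :=
  (∀ C ∈ S, IsChainSet C) ∧ ∀ C ∈ S, ∀ D ∈ S, C ≠ D → Disjoint C D

/-- A collection of pairwise disjoint chains is *interlaced* if any two of its chains are
joined by a finite sequence of chains of the collection in which consecutive chains are
linked. -/
def Interlaced (S : Finset (Finset ℤ)) : Prop :=
  ∀ C ∈ S, ∀ D ∈ S,
    Relation.ReflTransGen (fun X Y => X ∈ S ∧ Y ∈ S ∧ LinkedChains X Y) C D

/-- An *admissible configuration of size `n`*: an interlaced collection of pairwise disjoint
chains of positive integers with `n` entries in total and smallest entry equal to `1`. -/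
def AdmissibleConfig (n : ℕ) (S : Finset (Finset ℤ)) : Prop :=
  IsChainCollection S ∧ Interlaced S ∧ (entriesOf S).card = n ∧
    (∀ x ∈ entriesOf S, 0 < x) ∧ (1 : ℤ) ∈ entriesOf S
/-!
A σ-invariant upper set `T` of entries is a union of chains: with an entry of a chain `C` it
contains `max C`, hence `σ (max C) = min C`, hence all of `C`. If `C ⊆ T` is linked to `D`, then
`max D` exceeds an entry of `C`, so `D ⊆ T` as well; thus `T` is a union of linkage components,
and it is everything when `S` is interlaced. Conversely, the entries of the component of the
chain holding the largest entry form a σ-invariant set, and it is an upper set: a chain of the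
component reaching above an entry `y` outside the component cannot reach below `y`, or it would
be linked to the chain of `y`.
-/

open Finset Relation

lemma fmax_eq_max' {C : Finset ℤ} (h : C.Nonempty) : fmax C = C.max' h := by
  rw [fmax, ← coe_max' h, WithBot.unbotD_coe]

lemma fmin_eq_min' {C : Finset ℤ} (h : C.Nonempty) : fmin C = C.min' h := by
  rw [fmin, ← coe_min' h, WithTop.untopD_coe]

lemma le_fmax {C : Finset ℤ} {x : ℤ} (hx : x ∈ C) : x ≤ fmax C := by
  rw [fmax_eq_max' ⟨x, hx⟩]
  exact le_max' C x hx

lemma fmin_le {C : Finset ℤ} {x : ℤ} (hx : x ∈ C) : fmin C ≤ x := by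
  rw [fmin_eq_min' ⟨x, hx⟩]
  exact min'_le C x hx

lemma fmax_mem {C : Finset ℤ} (h : C.Nonempty) : fmax C ∈ C := by
  rw [fmax_eq_max' h]
  exact max'_mem C h

lemma fmin_mem {C : Finset ℤ} (h : C.Nonempty) : fmin C ∈ C := by
  rw [fmin_eq_min' h]
  exact min'_mem C h

lemma fmax_eq_of_mem {C : Finset ℤ} {a : ℤ} (ha : a ∈ C) (h : ∀ x ∈ C, x ≤ a) : fmax C = a :=
  le_antisymm (h _ (fmax_mem ⟨a, ha⟩)) (le_fmax ha)

lemma fmin_eq_of_mem {C : Finset ℤ} {a : ℤ} (ha : a ∈ C) (h : ∀ x ∈ C, a ≤ x) : fmin C = a :=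
  le_antisymm (fmin_le ha) (h _ (fmin_mem ⟨a, ha⟩))

namespace IsChainSet

variable {C : Finset ℤ}

lemma nonempty (h : IsChainSet C) : C.Nonempty := by
  obtain ⟨c, k, rfl⟩ := h
  exact image_nonempty.2 nonempty_range_add_one

lemma reflect_mem (h : IsChainSet C) {x : ℤ} (hx : x ∈ C) : fmax C + fmin C - x ∈ C := by
  obtain ⟨c, k, rfl⟩ := h
  have mem_iff : ∀ y, y ∈ (range (k + 1)).image (fun i : ℕ => c - 2 * (i : ℤ)) ↔
      ∃ i : ℕ, i ≤ k ∧ c - 2 * (i : ℤ) = y := by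
    simp
  have hmax : fmax ((range (k + 1)).image (fun i : ℕ => c - 2 * (i : ℤ))) = c :=
    fmax_eq_of_mem ((mem_iff c).2 ⟨0, by simp⟩) (by
      rintro _ hy
      obtain ⟨i, -, rfl⟩ := (mem_iff _).1 hy
      omega)
  have hmin : fmin ((range (k + 1)).image (fun i : ℕ => c - 2 * (i : ℤ))) = c - 2 * k :=
    fmin_eq_of_mem ((mem_iff _).2 ⟨k, le_rfl, rfl⟩) (by
      rintro _ hy
      obtain ⟨i, hi, rfl⟩ := (mem_iff _).1 hy
      omega)
  obtain ⟨i, hi, rfl⟩ := (mem_iff x).1 hx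
  exact (mem_iff _).2 ⟨k - i, Nat.sub_le k i, by rw [hmax, hmin]; omega⟩

lemma image_reflect (h : IsChainSet C) : C.image (fun x => fmax C + fmin C - x) = C :=
  eq_of_subset_of_card_le (image_subset_iff.2 fun _ => h.reflect_mem)
    (card_image_of_injective C sub_right_injective).ge

end IsChainSet

lemma LinkedChains.symm {C D : Finset ℤ} (h : LinkedChains C D) : LinkedChains D C :=
  ⟨h.1.symm, h.2.symm⟩

lemma linkedChains_of_fmin_lt_of_lt_fmax {Z D : Finset ℤ} (hZ : Z.Nonempty) (hZD : Disjoint Z D)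
    {y : ℤ} (hy : y ∈ D) (hmin : fmin Z < y) (hmax : y < fmax Z) : LinkedChains Z D := by
  refine ⟨hZD, ?_⟩
  have hne : fmax Z ≠ fmax D := fun h =>
    disjoint_left.1 hZD (fmax_mem hZ) (h ▸ fmax_mem ⟨y, hy⟩)
  rcases hne.lt_or_gt with hlt | hgt
  · exact Or.inr ⟨hlt, (fmin_le hy).trans_lt hmax⟩
  · exact Or.inl ⟨hgt, hmin.trans_le (le_fmax hy)⟩

def LinkedWithin (S : Finset (Finset ℤ)) (X Y : Finset ℤ) : Prop :=
  X ∈ S ∧ Y ∈ S ∧ LinkedChains X Y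

instance (S : Finset (Finset ℤ)) : Std.Symm (LinkedWithin S) where
  symm _ _ h := ⟨h.2.1, h.1, h.2.2.symm⟩

lemma mem_entriesOf {S : Finset (Finset ℤ)} {x : ℤ} : x ∈ entriesOf S ↔ ∃ C ∈ S, x ∈ C := by
  simp [entriesOf]

lemma subset_entriesOf {S : Finset (Finset ℤ)} {C : Finset ℤ} (hC : C ∈ S) :
    C ⊆ entriesOf S :=
  subset_biUnion_of_mem id hC

section Invariant

variable {S : Finset (Finset ℤ)} {σ : ℤ → ℤ} {T : Finset ℤ}

lemma subset_of_mem_of_image_eq (hσ : ∀ C ∈ S, ∀ x ∈ C, σ x = fmax C + fmin C - x)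
    (hup : ∀ x ∈ T, ∀ y ∈ entriesOf S, x ≤ y → y ∈ T) (himg : T.image σ = T)
    {C : Finset ℤ} (hC : C ∈ S) {x : ℤ} (hxC : x ∈ C) (hxT : x ∈ T) : C ⊆ T := by
  have hmaxT : fmax C ∈ T := hup x hxT _ (subset_entriesOf hC (fmax_mem ⟨x, hxC⟩)) (le_fmax hxC)
  have hminT : fmin C ∈ T := by
    have h := mem_image_of_mem σ hmaxT
    rwa [himg, hσ C hC _ (fmax_mem ⟨x, hxC⟩), add_sub_cancel_left] at h
  exact fun z hz => hup _ hminT z (subset_entriesOf hC hz) (fmin_le hz)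

lemma subset_of_reflTransGen (hS : IsChainCollection S)
    (hσ : ∀ C ∈ S, ∀ x ∈ C, σ x = fmax C + fmin C - x)
    (hup : ∀ x ∈ T, ∀ y ∈ entriesOf S, x ≤ y → y ∈ T) (himg : T.image σ = T)
    {C D : Finset ℤ} (hCT : C ⊆ T) (hCD : ReflTransGen (LinkedWithin S) C D) : D ⊆ T := by
  induction hCD with
  | refl => exact hCT
  | @tail X Y _ hXY hXT =>
    obtain ⟨hX, hY, -, hlink⟩ := hXY
    have hXne := (hS.1 X hX).nonempty
    have hYne := (hS.1 Y hY).nonempty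
    have hmaxY : fmax Y ∈ T := by
      rcases hlink with ⟨-, h⟩ | ⟨h, -⟩
      · exact hup _ (hXT (fmin_mem hXne)) _ (subset_entriesOf hY (fmax_mem hYne)) h.le
      · exact hup _ (hXT (fmax_mem hXne)) _ (subset_entriesOf hY (fmax_mem hYne)) h.le
    exact subset_of_mem_of_image_eq hσ hup himg hY (fmax_mem hYne) hmaxY

lemma entriesOf_subset_of_interlaced (hS : IsChainCollection S) (hI : Interlaced S)
    (hσ : ∀ C ∈ S, ∀ x ∈ C, σ x = fmax C + fmin C - x)
    (hTE : T ⊆ entriesOf S) (hup : ∀ x ∈ T, ∀ y ∈ entriesOf S, x ≤ y → y ∈ T)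
    (himg : T.image σ = T) (hT : T.Nonempty) : entriesOf S ⊆ T := by
  obtain ⟨t, ht⟩ := hT
  obtain ⟨C, hC, htC⟩ := mem_entriesOf.1 (hTE ht)
  have hCT := subset_of_mem_of_image_eq hσ hup himg hC htC ht
  intro x hx
  obtain ⟨D, hD, hxD⟩ := mem_entriesOf.1 hx
  exact subset_of_reflTransGen hS hσ hup himg hCT (hI C hC D hD) hxD

end Invariant

section Component

open Classical in
noncomputable def componentEntries (S : Finset (Finset ℤ)) (C : Finset ℤ) : Finset ℤ :=
  (S.filter (ReflTransGen (LinkedWithin S) C)).biUnion id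

variable {S : Finset (Finset ℤ)} {C : Finset ℤ}

lemma mem_componentEntries {x : ℤ} :
    x ∈ componentEntries S C ↔ ∃ Z ∈ S, ReflTransGen (LinkedWithin S) C Z ∧ x ∈ Z := by
  simp [componentEntries, and_assoc]

lemma componentEntries_subset : componentEntries S C ⊆ entriesOf S := fun _ hx =>
  let ⟨_, hZ, _, hxZ⟩ := mem_componentEntries.1 hx
  subset_entriesOf hZ hxZ

lemma notMem_componentEntries (hS : IsChainCollection S) {W : Finset ℤ} (hW : W ∈ S)
    (hCW : ¬ ReflTransGen (LinkedWithin S) C W) {x : ℤ} (hx : x ∈ W) :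
    x ∉ componentEntries S C := by
  rintro hxC
  obtain ⟨Z, hZ, hCZ, hxZ⟩ := mem_componentEntries.1 hxC
  have hZW : Z ≠ W := by rintro rfl; exact hCW hCZ
  exact disjoint_left.1 (hS.2 Z hZ W hW hZW) hxZ hx

lemma image_componentEntries (hS : IsChainCollection S) {σ : ℤ → ℤ}
    (hσ : ∀ C ∈ S, ∀ x ∈ C, σ x = fmax C + fmin C - x) :
    (componentEntries S C).image σ = componentEntries S C := by
  classical
  rw [componentEntries, biUnion_image]
  refine biUnion_congr rfl fun Z hZ => ?_
  have hZS := (mem_filter.1 hZ).1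
  rw [id, image_congr (hσ Z hZS)]
  exact (hS.1 Z hZS).image_reflect

lemma lt_fmin_of_reflTransGen (hS : IsChainCollection S) (hC : C ∈ S)
    (htop : fmax (entriesOf S) ∈ C) {D : Finset ℤ} (hD : D ∈ S)
    (hCD : ¬ ReflTransGen (LinkedWithin S) C D) {y : ℤ} (hy : y ∈ D) {Z : Finset ℤ}
    (hCZ : ReflTransGen (LinkedWithin S) C Z) : y < fmin Z := by
  suffices y < fmax Z ∧ y < fmin Z from this.2
  have hZD : ∀ {Z}, Z ∈ S → ReflTransGen (LinkedWithin S) C Z → Z ≠ D := by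
    rintro _ - hCZ rfl; exact hCD hCZ
  have hy_lt_fmin : ∀ {Z}, Z ∈ S → ReflTransGen (LinkedWithin S) C Z → y < fmax Z →
      y < fmin Z := by
    intro Z hZ hCZ hyZ
    have hdisj := hS.2 Z hZ D hD (hZD hZ hCZ)
    have hZne := (hS.1 Z hZ).nonempty
    refine lt_of_le_of_ne (not_lt.1 fun hlt => hCD (hCZ.tail ⟨hZ, hD, ?_⟩))
      fun h => disjoint_left.1 hdisj (h ▸ fmin_mem hZne) hy
    exact linkedChains_of_fmin_lt_of_lt_fmax hZne hdisj hy hlt hyZ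
  induction hCZ with
  | refl =>
    have hyC : y ≠ fmax C := fun h =>
      disjoint_left.1 (hS.2 C hC D hD (hZD hC .refl)) (fmax_mem ⟨_, htop⟩) (h ▸ hy)
    have hy_lt : y < fmax C :=
      lt_of_le_of_ne ((le_fmax (subset_entriesOf hD hy)).trans (le_fmax htop)) hyC
    exact ⟨hy_lt, hy_lt_fmin hC .refl hy_lt⟩
  | @tail X Y hCX hXY ih =>
    have hy_lt : y < fmax Y := by
      rcases hXY.2.2.2 with ⟨-, h⟩ | ⟨h, -⟩
      · exact ih.2.trans h
      · exact ih.1.trans h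
    exact ⟨hy_lt, hy_lt_fmin hXY.2.1 (hCX.tail hXY) hy_lt⟩

end Component

lemma exists_invariant_upper_ssubset_of_not_interlaced {S : Finset (Finset ℤ)}
    (hS : IsChainCollection S) {σ : ℤ → ℤ} (hσ : ∀ C ∈ S, ∀ x ∈ C, σ x = fmax C + fmin C - x)
    (hnI : ¬ Interlaced S) :
    ∃ T ⊂ entriesOf S, (∀ x ∈ T, ∀ y ∈ entriesOf S, x ≤ y → y ∈ T) ∧ T.Nonempty ∧
      T.image σ = T := by
  obtain ⟨C₁, hC₁, D₁, hD₁, hC₁D₁⟩ :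
      ∃ C₁ ∈ S, ∃ D₁ ∈ S, ¬ ReflTransGen (LinkedWithin S) C₁ D₁ := by
    by_contra! h
    exact hnI h
  have hEne : (entriesOf S).Nonempty :=
    (hS.1 C₁ hC₁).nonempty.mono (subset_entriesOf hC₁)
  obtain ⟨C, hC, htop⟩ := mem_entriesOf.1 (fmax_mem hEne)
  obtain ⟨W, hW, hCW⟩ : ∃ W ∈ S, ¬ ReflTransGen (LinkedWithin S) C W := by
    by_cases hCC₁ : ReflTransGen (LinkedWithin S) C C₁
    · exact ⟨D₁, hD₁, fun hCD₁ => hC₁D₁ ((Std.Symm.symm _ _ hCC₁).trans hCD₁)⟩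
    · exact ⟨C₁, hC₁, hCC₁⟩
  have hWne := (hS.1 W hW).nonempty
  refine ⟨componentEntries S C, (ssubset_iff_of_subset componentEntries_subset).2
      ⟨fmax W, subset_entriesOf hW (fmax_mem hWne), notMem_componentEntries hS hW hCW
        (fmax_mem hWne)⟩, ?_, ⟨_, mem_componentEntries.2 ⟨C, hC, .refl, htop⟩⟩,
      image_componentEntries hS hσ⟩
  intro x hx y hy hxy
  by_contra hyC
  obtain ⟨D, hD, hyD⟩ := mem_entriesOf.1 hy
  have hCD : ¬ ReflTransGen (LinkedWithin S) C D := fun hCD =>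
    hyC (mem_componentEntries.2 ⟨D, hD, hCD, hyD⟩)
  obtain ⟨Z, -, hCZ, hxZ⟩ := mem_componentEntries.1 hx
  exact (lt_fmin_of_reflTransGen hS hC htop hD hCD hyD hCZ).not_ge (hxy.trans' (fmin_le hxZ))

theorem interlaced_iff_no_invariant_top_segment_general (S : Finset (Finset ℤ))
    (hS : IsChainCollection S) (n : ℕ) (hcard : (entriesOf S).card = n)
    (σ : ℤ → ℤ) (hσ : ∀ C ∈ S, ∀ x ∈ C, σ x = fmax C + fmin C - x) :
    Interlaced S ↔
      ∀ T : Finset ℤ, T ⊆ entriesOf S →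
        (∀ x ∈ T, ∀ y ∈ entriesOf S, x ≤ y → y ∈ T) →
        1 ≤ T.card → T.card ≤ n - 1 → T.image σ ≠ T := by
  constructor
  · intro hI T hTE hup hpos hlt himg
    have hET := entriesOf_subset_of_interlaced hS hI hσ hTE hup himg (card_pos.1 hpos)
    have := card_le_card hET
    omega
  · intro hT
    by_contra hnI
    obtain ⟨T, hTE, hup, hTne, himg⟩ := exists_invariant_upper_ssubset_of_not_interlaced hS hσ hnI
    have := card_lt_card hTE
    exact hT T hTE.subset hup (card_pos.2 hTne) (by omega) himg

/-- **Proposition 3.1 (combinatorial form).** Let `S` be a finite collection of pairwise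
disjoint chains with `n ≥ 2` entries in total, and let `σ` be the bijection of the entry set
that reverses each chain, `σ x = max C + min C - x` for `x` in the chain `C`.  Then `S` is
interlaced if and only if for every `1 ≤ a ≤ n - 1` the set of the `a` largest entries
(equivalently, every upward-closed subset of the entries of cardinality `a`) is not mapped
onto itself by `σ`. -/
theorem interlaced_iff_no_invariant_top_segment (S : Finset (Finset ℤ))
    (hS : IsChainCollection S) (n : ℕ) (hn : 2 ≤ n) (hcard : (entriesOf S).card = n)
    (σ : ℤ → ℤ) (hσ : ∀ C ∈ S, ∀ x ∈ C, σ x = fmax C + fmin C - x) :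
    Interlaced S ↔
      ∀ T : Finset ℤ, T ⊆ entriesOf S →
        (∀ x ∈ T, ∀ y ∈ entriesOf S, x ≤ y → y ∈ T) →
        1 ≤ T.card → T.card ≤ n - 1 → T.image σ ≠ T :=
  interlaced_iff_no_invariant_top_segment_general S hS n hcard σ hσ
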